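/- arXiv:2307.11822 — 5 statements merged into one kernel-verified Lean document; each statement's English description precedes it below -/
import Mathlib

section
/- (Cauchy–Binet preservation) Let B be an n×n matrix that is SR_k(ε) (every nonzero r×r minor has sign ε_r for 1 ≤ r ≤ k) and has rank at least k, and let F be an n×n totally positive matrix (all minors strictly positive). Then A := F·B·F is SSR_k(ε): every r×r minor of A is nonzero with sign ε_r, for 1 ≤ r ≤ k. -/
open Matrix Filter

/-- Number of sign changes in a list of reals (consecutive pairs with negative product). -/
noncomputable def signChanges (l : List ℝ) : ℕ :=
  (l.zip l.tail).countP (fun p => decide (p.1 * p.2 < 0))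

/-- `S^-(v)`: sign changes of the coordinates of `v` after discarding zero entries. -/
noncomputable def Sm {n : ℕ} (v : Fin n → ℝ) : ℕ :=
  signChanges ((List.ofFn v).filter (fun x => decide (x ≠ 0)))

/-- `S^+(v)`: maximal number of sign changes over all ±1 completions of the zero
entries of `v`, with the convention `S^+(0) = n`. -/
noncomputable def Sp {n : ℕ} (v : Fin n → ℝ) : ℕ :=
  if v = 0 then n
  else Finset.univ.sup (fun σ : Fin n → Bool =>
    signChanges (List.ofFn (fun i => if v i = 0 then (if σ i then (1:ℝ) else -1) else v i)))

/-- First nonzero entry of a vector (`0` if the vector is zero). -/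
noncomputable def firstNz {n : ℕ} (v : Fin n → ℝ) : ℝ :=
  ((List.ofFn v).filter (fun x => decide (x ≠ 0))).headI

/-- `A` is strictly sign regular with sign pattern `ε`:
every `r × r` minor (`1 ≤ r ≤ min m n`) is nonzero with sign `ε r`. -/
def ssrPattern {m n : ℕ} (A : Matrix (Fin m) (Fin n) ℝ) (ε : ℕ → ℝ) : Prop :=
  ∀ r : ℕ, 1 ≤ r → r ≤ min m n → ∀ (f : Fin r → Fin m) (g : Fin r → Fin n),
    StrictMono f → StrictMono g → 0 < ε r * (A.submatrix f g).det

/-- `A` is sign regular with sign pattern `ε`: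
every nonzero `r × r` minor (`1 ≤ r ≤ min m n`) has sign `ε r`. -/
def srPattern {m n : ℕ} (A : Matrix (Fin m) (Fin n) ℝ) (ε : ℕ → ℝ) : Prop :=
  ∀ r : ℕ, 1 ≤ r → r ≤ min m n → ∀ (f : Fin r → Fin m) (g : Fin r → Fin n),
    StrictMono f → StrictMono g → 0 ≤ ε r * (A.submatrix f g).det

/-- The map `f` picks out consecutive indices. -/
def Contig {r m : ℕ} (f : Fin r → Fin m) : Prop :=
  ∃ a : ℕ, ∀ i : Fin r, (f i : ℕ) = a + (i : ℕ)

/-! By the Cauchy–Binet formula, applied twice,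
`ε r * det (FBF)[f, g] = ∑ u v, det F[f, u] * (ε r * det B[u, v]) * det F[v, g]`
over strictly increasing `u, v`. Every term is nonnegative because `F` is totally positive and
`B` is sign regular, and since `B` has rank at least `r` some minor `B[u₀, v₀]` is nonzero,
which makes its term strictly positive. -/

open Finset

section Sorting

variable {ι : Type*} [LinearOrder ι] {r : ℕ}

theorem Function.Injective.exists_strictMono_comp_perm {u : Fin r → ι}
    (hu : Function.Injective u) :
    ∃ (v : Fin r → ι) (σ : Equiv.Perm (Fin r)), StrictMono v ∧ u = v ∘ σ := by
  refine ⟨u ∘ Tuple.sort u, (Tuple.sort u)⁻¹,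
    (Tuple.monotone_sort u).strictMono_of_injective (hu.comp (Tuple.sort u).injective), ?_⟩
  ext i
  simp

theorem StrictMono.eq_and_eq_of_comp_perm_eq {v w : Fin r → ι} {σ τ : Equiv.Perm (Fin r)}
    (hv : StrictMono v) (hw : StrictMono w) (h : v ∘ σ = w ∘ τ) : v = w ∧ σ = τ := by
  have hvw : v = w := by
    rw [← hv.range_inj hw, ← σ.surjective.range_comp v, h, τ.surjective.range_comp]
  subst hvw
  exact ⟨rfl, Equiv.ext fun i => hv.injective (congrFun h i)⟩

end Sorting

section CauchyBinet

variable {ι R : Type*} [CommRing R] {r : ℕ}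

theorem Matrix.det_submatrix_mul_det_submatrix_eq_sum_perm (A : Matrix (Fin r) ι R)
    (C : Matrix ι (Fin r) R) (v : Fin r → ι) :
    (A.submatrix id v).det * (C.submatrix v id).det
      = ∑ σ : Equiv.Perm (Fin r), (∏ i, A i (v (σ i))) * (C.submatrix (v ∘ σ) id).det := by
  rw [← det_transpose, det_apply', sum_mul]
  refine sum_congr rfl fun σ _ => ?_
  rw [show C.submatrix (v ∘ σ) id = (C.submatrix v id).submatrix σ id from rfl, det_permute]
  simp [mul_comm, mul_left_comm]

variable [Fintype ι]

theorem Matrix.det_mul_eq_sum_prod_mul_det (A : Matrix (Fin r) ι R) (C : Matrix ι (Fin r) R) :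
    (A * C).det = ∑ φ : Fin r → ι, (∏ i, A i (φ i)) * (C.submatrix φ id).det := by
  have hrows : (A * C).det
      = (detRowAlternating (R := R)).toMultilinearMap fun i => ∑ t, A i t • C t := by
    change detRowAlternating _ = detRowAlternating _
    congr 1
    ext i j
    simp [mul_apply]
  rw [hrows, MultilinearMap.map_sum]
  exact sum_congr rfl fun φ _ => det_mul_column (fun i => A i (φ i)) (C.submatrix φ id)

theorem Matrix.det_mul_eq_sum_injective [DecidableEq ι] (A : Matrix (Fin r) ι R)
    (C : Matrix ι (Fin r) R) :
    (A * C).det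
      = ∑ φ : Fin r → ι with φ.Injective, (∏ i, A i (φ i)) * (C.submatrix φ id).det := by
  rw [det_mul_eq_sum_prod_mul_det, sum_filter_of_ne]
  intro φ _ hφ
  by_contra hinj
  obtain ⟨i, j, hij, hne⟩ : ∃ i j, φ i = φ j ∧ i ≠ j := by
    simpa [Function.Injective] using hinj
  exact hφ (by rw [det_zero_of_row_eq hne (by ext; simp [hij]), mul_zero])

variable [LinearOrder ι]

theorem Matrix.det_mul_eq_sum_strictMono (A : Matrix (Fin r) ι R) (C : Matrix ι (Fin r) R) :
    (A * C).det = ∑ v : Fin r → ι with StrictMono v,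
      (A.submatrix id v).det * (C.submatrix v id).det := by
  simp_rw [det_submatrix_mul_det_submatrix_eq_sum_perm, ← sum_product']
  rw [det_mul_eq_sum_injective]
  symm
  refine sum_bij (fun p _ => p.1 ∘ p.2) ?_ ?_ ?_ fun _ _ => rfl
  · rintro ⟨v, σ⟩ hp
    simp only [mem_product, mem_filter_univ] at hp ⊢
    exact hp.1.injective.comp σ.injective
  · rintro ⟨v, σ⟩ hp ⟨w, τ⟩ hq h
    simp only [mem_product, mem_filter_univ] at hp hq
    exact Prod.ext_iff.mpr (hp.1.eq_and_eq_of_comp_perm_eq hq.1 h)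
  · intro φ hφ
    obtain ⟨v, σ, hv, rfl⟩ :=
      ((mem_filter_univ φ).mp hφ).exists_strictMono_comp_perm
    exact ⟨(v, σ), by simp [hv], rfl⟩

end CauchyBinet

theorem Matrix.det_submatrix_mul {m n ι R : Type*} [Fintype ι] [LinearOrder ι] [CommRing R]
    {r : ℕ} (M : Matrix m ι R) (N : Matrix ι n R) (f : Fin r → m) (g : Fin r → n) :
    ((M * N).submatrix f g).det
      = ∑ u : Fin r → ι with StrictMono u, (M.submatrix f u).det * (N.submatrix u g).det := by
  rw [submatrix_mul M N f id g Function.bijective_id, det_mul_eq_sum_strictMono]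
  rfl

theorem Matrix.det_submatrix_mul_mul {ι m n o R : Type*} [Fintype m] [LinearOrder m]
    [Fintype n] [LinearOrder n] [CommRing R] {r : ℕ} (L : Matrix ι m R) (M : Matrix m n R)
    (N : Matrix n o R) (f : Fin r → ι) (g : Fin r → o) :
    ((L * M * N).submatrix f g).det = ∑ u : Fin r → m with StrictMono u,
      ∑ v : Fin r → n with StrictMono v,
        (L.submatrix f u).det * (M.submatrix u v).det * (N.submatrix v g).det := by
  rw [Matrix.mul_assoc, det_submatrix_mul]
  simp_rw [det_submatrix_mul, mul_sum, mul_assoc]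

section NonzeroMinor

variable {m n K : Type*} [Fintype m] [Fintype n] [Field K] {r : ℕ}

theorem Matrix.exists_injective_linearIndependent_rows_of_le_rank {A : Matrix m n K}
    (h : r ≤ A.rank) :
    ∃ f : Fin r → m, f.Injective ∧ LinearIndependent K (A.submatrix f id).row := by
  obtain ⟨κ, a, ha, hspan, hli⟩ := exists_linearIndependent' K A.row
  have : Fintype κ := Fintype.ofInjective a ha
  have hcard : r ≤ Fintype.card κ := by
    rwa [rank_eq_finrank_span_row, ← hspan, finrank_span_eq_card hli] at h
  obtain ⟨e⟩ : Nonempty (Fin r ↪ κ) := by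
    rwa [Function.Embedding.nonempty_iff_card_le, Fintype.card_fin]
  exact ⟨a ∘ e, ha.comp e.injective, hli.comp e e.injective⟩

theorem Matrix.exists_injective_det_submatrix_ne_zero_of_le_rank {A : Matrix m n K}
    (h : r ≤ A.rank) :
    ∃ (f : Fin r → m) (g : Fin r → n),
      f.Injective ∧ g.Injective ∧ (A.submatrix f g).det ≠ 0 := by
  obtain ⟨f, hf, hrows⟩ := exists_injective_linearIndependent_rows_of_le_rank h
  have hrank : (A.submatrix f id)ᵀ.rank = r := by
    rw [rank_transpose, hrows.rank_matrix, Fintype.card_fin]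
  obtain ⟨g, hg, hcols⟩ := exists_injective_linearIndependent_rows_of_le_rank hrank.ge
  refine ⟨f, g, hf, hg, ?_⟩
  rw [← det_transpose, ← isUnit_iff_ne_zero, ← isUnit_iff_isUnit_det,
    ← linearIndependent_rows_iff_isUnit]
  exact hcols

theorem Matrix.exists_strictMono_det_submatrix_ne_zero_of_le_rank [LinearOrder m]
    [LinearOrder n] {A : Matrix m n K} (h : r ≤ A.rank) :
    ∃ (f : Fin r → m) (g : Fin r → n),
      StrictMono f ∧ StrictMono g ∧ (A.submatrix f g).det ≠ 0 := by
  obtain ⟨f, g, hf, hg, hdet⟩ := exists_injective_det_submatrix_ne_zero_of_le_rank h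
  obtain ⟨f', σ, hf', rfl⟩ := hf.exists_strictMono_comp_perm
  obtain ⟨g', τ, hg', rfl⟩ := hg.exists_strictMono_comp_perm
  refine ⟨f', g', hf', hg', fun h0 => hdet ?_⟩
  rw [show A.submatrix (f' ∘ σ) (g' ∘ τ)
      = ((A.submatrix f' g').submatrix σ id).submatrix id τ from rfl,
    det_permute', det_permute, h0, mul_zero, mul_zero]

end NonzeroMinor

theorem stmt15_general {n k : ℕ} (ε : ℕ → ℝ)
    (hsv : ∀ r, ε r = 1 ∨ ε r = -1)
    (B F : Matrix (Fin n) (Fin n) ℝ)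
    (hB : ∀ r : ℕ, 1 ≤ r → r ≤ k → ∀ (f g : Fin r → Fin n),
      StrictMono f → StrictMono g → 0 ≤ ε r * (B.submatrix f g).det)
    (hrank : k ≤ B.rank)
    (hF : ∀ r : ℕ, 1 ≤ r → ∀ (f g : Fin r → Fin n),
      StrictMono f → StrictMono g → 0 < (F.submatrix f g).det) :
    ∀ r : ℕ, 1 ≤ r → r ≤ k → ∀ (f g : Fin r → Fin n),
      StrictMono f → StrictMono g → 0 < ε r * ((F * B * F).submatrix f g).det := by
  intro r hr hrk f g hf hg
  obtain ⟨u₀, v₀, hu₀, hv₀, hdet⟩ := exists_strictMono_det_submatrix_ne_zero_of_le_rank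
    (A := B) (hrk.trans hrank)
  have hε : ε r ≠ 0 := by rcases hsv r with h | h <;> simp [h]
  set S : Finset (Fin r → Fin n) := {w | StrictMono w}
  have hexpand : ε r * ((F * B * F).submatrix f g).det = ∑ u ∈ S, ∑ v ∈ S,
      (F.submatrix f u).det * (ε r * (B.submatrix u v).det) * (F.submatrix v g).det := by
    simp_rw [det_submatrix_mul_mul, mul_sum]
    exact sum_congr rfl fun _ _ => sum_congr rfl fun _ _ => by ring
  have hterm : ∀ u ∈ S, ∀ v ∈ S,
      0 ≤ (F.submatrix f u).det * (ε r * (B.submatrix u v).det) * (F.submatrix v g).det := by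
    simp only [S, mem_filter_univ]
    exact fun u hu v hv => mul_nonneg
      (mul_nonneg (hF r hr f u hf hu).le (hB r hr hrk u v hu hv)) (hF r hr v g hv hg).le
  have hB₀ : 0 < ε r * (B.submatrix u₀ v₀).det :=
    (hB r hr hrk u₀ v₀ hu₀ hv₀).lt_of_ne (mul_ne_zero hε hdet).symm
  have hterm₀ : 0 < (F.submatrix f u₀).det * (ε r * (B.submatrix u₀ v₀).det)
      * (F.submatrix v₀ g).det :=
    mul_pos (mul_pos (hF r hr f u₀ hf hu₀) hB₀) (hF r hr v₀ g hv₀ hg)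
  have hmem {w : Fin r → Fin n} (hw : StrictMono w) : w ∈ S := (mem_filter_univ w).mpr hw
  rw [hexpand]
  exact sum_pos' (fun u hu => sum_nonneg (hterm u hu)) ⟨u₀, hmem hu₀,
    sum_pos' (hterm u₀ (hmem hu₀)) ⟨v₀, hmem hv₀, hterm₀⟩⟩

theorem stmt15 {n k : ℕ} (hk : 1 ≤ k) (hkn : k ≤ n) (ε : ℕ → ℝ)
    (hsv : ∀ r, ε r = 1 ∨ ε r = -1)
    (B F : Matrix (Fin n) (Fin n) ℝ)
    (hB : ∀ r : ℕ, 1 ≤ r → r ≤ k → ∀ (f g : Fin r → Fin n),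
      StrictMono f → StrictMono g → 0 ≤ ε r * (B.submatrix f g).det)
    (hrank : k ≤ B.rank)
    (hF : ∀ r : ℕ, 1 ≤ r → ∀ (f g : Fin r → Fin n),
      StrictMono f → StrictMono g → 0 < (F.submatrix f g).det) :
    ∀ r : ℕ, 1 ≤ r → r ≤ k → ∀ (f g : Fin r → Fin n),
      StrictMono f → StrictMono g → 0 < ε r * ((F * B * F).submatrix f g).det :=
  stmt15_general ε hsv B F hB hrank hF
end

section
/- The Gaussian kernel matrix F_σ := (exp(−σ(i−j)^2))_{i,j=1}^n is totally positive for every σ > 0 and every n ≥ 1, i.e., every minor of F_σ is strictly positive. -/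
open Matrix Filter

section Helpers
open Polynomial

/-- A nonzero real polynomial has fewer distinct positive roots than terms. -/
lemma sparse_roots_aux : ∀ (N : ℕ) (p : ℝ[X]), p.natDegree ≤ N → p ≠ 0 →
    ∀ S : Finset ℝ, (∀ x ∈ S, 0 < x ∧ p.IsRoot x) → S.card < p.support.card := by
  intro N
  induction N with
  | zero =>
    intro p hdeg hp S hS
    have hpc : p = C (p.coeff 0) := p.eq_C_of_natDegree_eq_zero (Nat.le_zero.mp hdeg)
    have hc : p.coeff 0 ≠ 0 := by
      intro h; apply hp; rw [hpc, h, map_zero]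
    have hS0 : S = ∅ := by
      rcases Finset.eq_empty_or_nonempty S with h | ⟨x, hx⟩
      · exact h
      · exact absurd ((hS x hx).2) (by rw [hpc]; simp [IsRoot, hc])
    rw [hS0]
    simpa using Finset.card_pos.mpr (nonempty_support_iff.mpr hp)
  | succ N IH =>
    intro p hdeg hp S hS
    rcases Nat.eq_zero_or_pos p.natDegree with hd0 | hdpos
    · -- constant case, same as base
      have hpc : p = C (p.coeff 0) := p.eq_C_of_natDegree_eq_zero hd0
      have hc : p.coeff 0 ≠ 0 := by
        intro h; apply hp; rw [hpc, h, map_zero]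
      have hS0 : S = ∅ := by
        rcases Finset.eq_empty_or_nonempty S with h | ⟨x, hx⟩
        · exact h
        · exact absurd ((hS x hx).2) (by rw [hpc]; simp [IsRoot, hc])
      rw [hS0]
      simpa using Finset.card_pos.mpr (nonempty_support_iff.mpr hp)
    by_cases h0 : p.coeff 0 = 0
    · -- factor out X
      set q := p.divX with hq
      have hpq : p = q * X := by
        have := p.divX_mul_X_add
        rw [h0, map_zero, add_zero] at this
        exact this.symm
      have hqne : q ≠ 0 := by
        intro h; apply hp; rw [hpq, h, zero_mul]
      have hqd : q.natDegree ≤ N := by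
        rw [hq, p.natDegree_divX_eq_natDegree_tsub_one]; omega
      have hroots : ∀ x ∈ S, 0 < x ∧ q.IsRoot x := by
        intro x hx
        obtain ⟨hx0, hxr⟩ := hS x hx
        refine ⟨hx0, ?_⟩
        have : q.eval x * x = 0 := by
          have := hxr
          rwa [hpq, IsRoot, eval_mul, eval_X] at this
        rcases mul_eq_zero.mp this with h | h
        · exact h
        · exact absurd h hx0.ne'
      have hsupp : p.support = q.support.image (· + 1) := by
        ext n
        simp only [mem_support_iff, Finset.mem_image]
        constructor
        · intro hn
          rcases n with _ | n
          · exact absurd h0 hn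
          · refine ⟨n, ?_, rfl⟩
            rwa [hpq, coeff_mul_X] at hn
        · rintro ⟨n, hn, rfl⟩
          rwa [hpq, coeff_mul_X]
      have : S.card < q.support.card := IH q hqd hqne S hroots
      rwa [hsupp, Finset.card_image_of_injective _ (add_left_injective 1)]
    · -- coeff 0 ≠ 0 : use derivative and Rolle
      set q := derivative p with hq
      have hqne : q ≠ 0 := by
        intro h
        have := eq_C_of_derivative_eq_zero h
        rw [this, natDegree_C] at hdpos
        omega
      have hqd : q.natDegree ≤ N := by
        have h2 : q.natDegree < p.natDegree := by
          rw [hq]; exact natDegree_derivative_lt (by omega)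
        omega
      set t := q.roots.toFinset.filter (fun z => 0 < z) with ht
      have hcard1 : S.card ≤ (t \ S).card + 1 := by
        apply Finset.card_le_diff_of_interleaved
        intro x hx y hy hxy _
        obtain ⟨hx0, hxr⟩ := hS x hx
        obtain ⟨_, hyr⟩ := hS y hy
        obtain ⟨z, hz1, hz2⟩ := exists_deriv_eq_zero hxy p.continuousOn (hxr.trans hyr.symm)
        refine ⟨z, ?_, hz1⟩
        rw [ht, Finset.mem_filter, Multiset.mem_toFinset, mem_roots hqne]
        exact ⟨by rwa [IsRoot, ← p.deriv], hx0.trans hz1.1⟩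
      have hcard2 : t.card < q.support.card := by
        apply IH q hqd hqne
        intro z hz
        rw [ht, Finset.mem_filter, Multiset.mem_toFinset, mem_roots hqne] at hz
        exact ⟨hz.2, hz.1⟩
      have hsub : q.support ⊆ (p.support.erase 0).image (· - 1) := by
        intro n hn
        rw [mem_support_iff, coeff_derivative] at hn
        have hcp : p.coeff (n + 1) ≠ 0 := fun h => hn (by rw [h, zero_mul])
        refine Finset.mem_image.mpr ⟨n + 1, ?_, by omega⟩
        exact Finset.mem_erase.mpr ⟨Nat.succ_ne_zero n, mem_support_iff.mpr hcp⟩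
      have h0mem : (0 : ℕ) ∈ p.support := mem_support_iff.mpr h0
      have hcard3 : q.support.card ≤ p.support.card - 1 := by
        calc q.support.card ≤ ((p.support.erase 0).image (· - 1)).card :=
              Finset.card_le_card hsub
          _ ≤ (p.support.erase 0).card := Finset.card_image_le
          _ = p.support.card - 1 := Finset.card_erase_of_mem h0mem
      have hps : 1 ≤ p.support.card := Finset.card_pos.mpr ⟨0, h0mem⟩
      have := Finset.card_le_card (Finset.sdiff_subset (s := t) (t := S))
      omega


lemma det_pow_pos : ∀ (r : ℕ) (t : Fin (r+1) → ℝ) (m : Fin (r+1) → ℕ),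
    (∀ i, 0 < t i) → StrictMono t → StrictMono m →
    0 < (Matrix.of fun i j : Fin (r+1) => t i ^ m j).det := by
  intro r
  induction r with
  | zero =>
    intro t m hpos _ _
    rw [show (Matrix.of fun i j : Fin 1 => t i ^ m j).det = t 0 ^ m 0 from det_fin_one _]
    exact pow_pos (hpos 0) _
  | succ s IH =>
    intro t m hpos hmt hmm
    set L : Fin (s+2) := Fin.last (s+1) with hL
    -- cofactors
    set cof : Fin (s+2) → ℝ := fun j => (-1 : ℝ) ^ ((s+1) + (j : ℕ)) *
      (Matrix.of fun i k : Fin (s+1) => t (Fin.castSucc i) ^ m (j.succAbove k)).det with hcof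
    set p : ℝ[X] := ∑ j : Fin (s+2), C (cof j) * X ^ (m j) with hp
    -- evaluation of p
    have heval : ∀ x : ℝ, p.eval x =
        (Matrix.of fun i j : Fin (s+2) => (Function.update t L x i) ^ m j).det := by
      intro x
      rw [det_succ_row _ L]
      rw [hp, eval_finset_sum]
      refine Finset.sum_congr rfl fun j _ => ?_
      have hrow : ((Matrix.of fun i j : Fin (s+2) => (Function.update t L x i) ^ m j).submatrix
          L.succAbove j.succAbove) = Matrix.of fun i k : Fin (s+1) =>
            t (Fin.castSucc i) ^ m (j.succAbove k) := by
        ext i k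
        simp only [submatrix_apply, of_apply, hL, Fin.succAbove_last]
        rw [Function.update_of_ne (Fin.castSucc_lt_last i).ne]
      rw [hrow]
      simp only [of_apply, Function.update_self, eval_mul, eval_C, eval_pow, eval_X, hcof, hL,
        Fin.val_last]
      ring
    -- roots at t (castSucc i)
    have hroot : ∀ i : Fin (s+1), p.eval (t (Fin.castSucc i)) = 0 := by
      intro i
      rw [heval]
      apply det_zero_of_row_eq (i_ne_j := (Fin.castSucc_lt_last i).ne) (j := L)
      funext j
      simp only [of_apply, Function.update_self]
      rw [Function.update_of_ne (Fin.castSucc_lt_last i).ne]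
    -- value at t L is the determinant we want
    have hvalL : p.eval (t L) = (Matrix.of fun i j : Fin (s+2) => t i ^ m j).det := by
      rw [heval, Function.update_eq_self]
    -- the top coefficient
    have hcoefftop : p.coeff (m L) = cof L := by
      rw [hp, finset_sum_coeff]
      rw [Finset.sum_eq_single L]
      · simp [coeff_C_mul, coeff_X_pow]
      · intro j _ hj
        have : m j ≠ m L := fun h => hj (hmm.injective h)
        simp only [coeff_C_mul, coeff_X_pow]
        rw [if_neg (Ne.symm this), mul_zero]
      · simp
    have hcoflast : 0 < cof L := by
      rw [hcof]
      simp only [hL, Fin.val_last, Fin.succAbove_last]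
      rw [show (-1 : ℝ) ^ ((s+1) + (s+1)) = 1 from Even.neg_one_pow ⟨s+1, rfl⟩, one_mul]
      exact IH (fun i => t (Fin.castSucc i)) (fun k => m (Fin.castSucc k))
        (fun i => hpos _) (fun a b hab => hmt (by simpa using hab))
        (fun a b hab => hmm (by simpa using hab))
    have hcoeffne : p.coeff (m L) ≠ 0 := by rw [hcoefftop]; exact hcoflast.ne'
    have hpne : p ≠ 0 := by intro h; rw [h] at hcoeffne; simp at hcoeffne
    -- support bound
    have hsupp : p.support ⊆ Finset.image m Finset.univ := by
      intro k hk
      rw [mem_support_iff, hp, finset_sum_coeff] at hk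
      by_contra hmem
      apply hk
      refine Finset.sum_eq_zero fun j _ => ?_
      have : m j ≠ k := fun h => hmem (h ▸ Finset.mem_image_of_mem m (Finset.mem_univ j))
      simp only [coeff_C_mul, coeff_X_pow]
      rw [if_neg (Ne.symm this), mul_zero]
    have hsuppcard : p.support.card ≤ s + 2 := by
      calc p.support.card ≤ (Finset.image m Finset.univ).card := Finset.card_le_card hsupp
        _ ≤ Finset.univ.card := Finset.card_image_le
        _ = s + 2 := by simp
    -- natDegree and leading coefficient
    have hdegle : p.natDegree ≤ m L := by
      apply natDegree_le_iff_coeff_eq_zero.mpr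
      intro k hk
      by_contra hc
      obtain ⟨j, _, rfl⟩ := Finset.mem_image.mp (hsupp (mem_support_iff.mpr hc))
      exact absurd hk (not_lt.mpr (hmm.monotone (Fin.le_last j)))
    have hdeg : p.natDegree = m L := le_antisymm hdegle (le_natDegree_of_ne_zero hcoeffne)
    have hlead : 0 < p.leadingCoeff := by
      rw [leadingCoeff, hdeg, hcoefftop]; exact hcoflast
    have hdeg1 : 0 < p.degree := by
      rw [degree_eq_natDegree hpne, hdeg]
      have h01 : m 0 < m L := hmm (by simp [hL, Fin.lt_def])
      exact_mod_cast Nat.pos_of_ne_zero (by omega)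
    -- tends to infinity
    have htop : Tendsto (fun x => p.eval x) atTop atTop :=
      p.tendsto_atTop_of_leadingCoeff_nonneg hdeg1 hlead.le
    -- the finset of known roots
    set S0 : Finset ℝ := Finset.image (fun i : Fin (s+1) => t (Fin.castSucc i)) Finset.univ with hS0
    have hS0card : S0.card = s + 1 := by
      rw [hS0, Finset.card_image_of_injective _ (fun a b hab => by
        have := hmt.injective hab; exact Fin.castSucc_injective _ this)]
      simp
    have hS0mem : ∀ x ∈ S0, 0 < x ∧ p.IsRoot x := by
      intro x hx
      obtain ⟨i, _, rfl⟩ := Finset.mem_image.mp hx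
      exact ⟨hpos _, hroot i⟩
    have hS0lt : ∀ x ∈ S0, x < t L := by
      intro x hx
      obtain ⟨i, _, rfl⟩ := Finset.mem_image.mp hx
      exact hmt (Fin.castSucc_lt_last i)
    -- main claim
    rw [← hvalL]
    by_contra hle
    push_neg at hle
    -- find a root c ≥ t L
    have hcroot : ∃ c, t L ≤ c ∧ p.IsRoot c := by
      rcases eq_or_lt_of_le hle with heq | hlt
      · exact ⟨t L, le_refl _, heq⟩
      · obtain ⟨X0, hX0⟩ := ((htop.eventually_ge_atTop 1).and (eventually_gt_atTop (t L))).exists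
        have hsub : Set.Icc (p.eval (t L)) (p.eval X0) ⊆ (fun x => p.eval x) '' Set.Icc (t L) X0 :=
          intermediate_value_Icc hX0.2.le (p.continuousOn)
        obtain ⟨c, hc1, hc2⟩ := hsub ⟨hlt.le, by linarith [hX0.1]⟩
        exact ⟨c, hc1.1, hc2⟩
    obtain ⟨c, hcL, hcr⟩ := hcroot
    have hcS0 : c ∉ S0 := fun h => absurd (hS0lt c h) (not_lt.mpr hcL)
    have := sparse_roots_aux p.natDegree p (le_refl _) hpne (insert c S0)
      (by
        intro x hx
        rcases Finset.mem_insert.mp hx with rfl | hx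
        · exact ⟨(hpos L).trans_le hcL, hcr⟩
        · exact hS0mem x hx)
    rw [Finset.card_insert_of_notMem hcS0, hS0card] at this
    omega

end Helpers

theorem stmt16 {n : ℕ} (σ : ℝ) (hσ : 0 < σ) :
    ∀ r : ℕ, 1 ≤ r → ∀ (f g : Fin r → Fin n), StrictMono f → StrictMono g →
      0 < ((Matrix.of fun i j : Fin n =>
        Real.exp (-σ * ((i : ℝ) - (j : ℝ)) ^ 2)).submatrix f g).det := by
  intro r hr f g hf hg
  obtain ⟨s, rfl⟩ : ∃ s, r = s + 1 := ⟨r - 1, by omega⟩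
  set a : Fin (s+1) → ℝ := fun i => Real.exp (-σ * ((f i : ℕ) : ℝ) ^ 2) with ha
  set b : Fin (s+1) → ℝ := fun j => Real.exp (-σ * ((g j : ℕ) : ℝ) ^ 2) with hb
  set t : Fin (s+1) → ℝ := fun i => Real.exp (2*σ) ^ ((f i : ℕ)) with htt
  set m : Fin (s+1) → ℕ := fun j => (g j : ℕ) with hm
  have hent : ∀ (A B : ℕ), Real.exp (-σ * ((A:ℝ) - (B:ℝ))^2)
      = Real.exp (-σ * (A:ℝ)^2) * (Real.exp (-σ * (B:ℝ)^2) * (Real.exp (2*σ) ^ A) ^ B) := by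
    intro A B
    rw [← pow_mul, ← Real.exp_nat_mul, ← Real.exp_add, ← Real.exp_add]
    congr 1
    push_cast
    ring
  have key : ((Matrix.of fun i j : Fin n =>
      Real.exp (-σ * ((i : ℝ) - (j : ℝ)) ^ 2)).submatrix f g)
      = Matrix.of fun i j : Fin (s+1) => a i *
          ((Matrix.of fun i j : Fin (s+1) => b j * (Matrix.of fun i j : Fin (s+1) =>
            t i ^ m j) i j) i j) := by
    ext i j
    simp only [submatrix_apply, of_apply, ha, hb, htt, hm]
    exact hent (f i : ℕ) (g j : ℕ)
  rw [key, det_mul_column, det_mul_row]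
  have h1 : 0 < ∏ i, a i := Finset.prod_pos fun i _ => Real.exp_pos _
  have h2 : 0 < ∏ j, b j := Finset.prod_pos fun j _ => Real.exp_pos _
  have hq : (1:ℝ) < Real.exp (2*σ) := Real.one_lt_exp_iff.mpr (by linarith)
  have h3 : 0 < (Matrix.of fun i j : Fin (s+1) => t i ^ m j).det := by
    apply det_pow_pos s t m
    · intro i; exact pow_pos (by positivity) _
    · intro i j hij
      exact pow_lt_pow_right₀ hq (hf hij)
    · intro i j hij
      exact hg hij
  positivity
end

section
/- For every n ≥ 2 and every sign pattern ε = (ε_1,…,ε_{n−1}) ∈ {±1}^{n−1}, there exists an n×n real matrix A of rank n−1 (so det A = 0) that is SSR_{n−1}(ε): every r×r minor of A is nonzero with sign ε_r for all 1 ≤ r ≤ n−1. -/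
open Matrix Filter

namespace Stmt17Aux

open Topology

theorem det_expand {r m : ℕ} (U V : Matrix (Fin r) (Fin m) ℝ) (w : Fin m → ℝ) :
    (U * Matrix.diagonal w * Vᵀ).det
      = ∑ p : Fin r → Fin m, (∏ i, (w (p i) * V i (p i))) * (U.submatrix id p).det := by
  classical
  have hent : ∀ a b, (U * Matrix.diagonal w * Vᵀ) a b = ∑ j, U a j * w j * V b j := by
    intro a b
    rw [Matrix.mul_apply]
    simp [Matrix.mul_diagonal, Matrix.transpose_apply]
  rw [Matrix.det_apply']
  calc
    ∑ σ : Equiv.Perm (Fin r), (Equiv.Perm.sign σ : ℝ) * ∏ i, (U * Matrix.diagonal w * Vᵀ) (σ i) i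
        = ∑ σ : Equiv.Perm (Fin r), ∑ p : Fin r → Fin m,
            (Equiv.Perm.sign σ : ℝ) * ∏ i, (U (σ i) (p i) * w (p i) * V i (p i)) := by
      refine Finset.sum_congr rfl fun σ _ => ?_
      simp_rw [hent]
      rw [Finset.prod_univ_sum (fun _ => Finset.univ)
        (fun i j => U (σ i) j * w j * V i j), Fintype.piFinset_univ, Finset.mul_sum]
    _ = ∑ p : Fin r → Fin m, ∑ σ : Equiv.Perm (Fin r),
            (Equiv.Perm.sign σ : ℝ) * ∏ i, (U (σ i) (p i) * w (p i) * V i (p i)) :=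
      Finset.sum_comm
    _ = ∑ p : Fin r → Fin m, (∏ i, (w (p i) * V i (p i))) * (U.submatrix id p).det := by
      refine Finset.sum_congr rfl fun p _ => ?_
      rw [Matrix.det_apply', Finset.mul_sum]
      refine Finset.sum_congr rfl fun σ _ => ?_
      have h1 : ∏ i, (U (σ i) (p i) * w (p i) * V i (p i))
          = (∏ i, U (σ i) (p i)) * ∏ i, (w (p i) * V i (p i)) := by
        rw [← Finset.prod_mul_distrib]
        exact Finset.prod_congr rfl fun i _ => by ring
      have h2 : ∏ i, (U.submatrix id p) (σ i) i = ∏ i, U (σ i) (p i) := by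
        exact Finset.prod_congr rfl fun i _ => rfl
      rw [h1, h2]; ring

theorem strictMono_le_nat {r : ℕ} (f : Fin r → ℕ) (hf : StrictMono f) : ∀ i : Fin r, (i : ℕ) ≤ f i := by
  have key : ∀ v (hv : v < r), v ≤ f ⟨v, hv⟩ := by
    intro v
    induction v with
    | zero => intro _; exact Nat.zero_le _
    | succ k ih =>
      intro hv
      have hk : k < r := Nat.lt_of_succ_lt hv
      have h2 := hf (show (⟨k, hk⟩ : Fin r) < ⟨k + 1, hv⟩ by simp [Fin.lt_def])
      have h3 := ih hk
      omega
  intro i; exact key i.1 i.2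

theorem inj_sum {r m : ℕ} (p : Fin r → Fin m) (hp : Function.Injective p) :
    (∑ i : Fin r, (i : ℕ)) ≤ (∑ i, ((p i) : ℕ)) ∧
      ((∑ i, ((p i) : ℕ)) = (∑ i : Fin r, (i : ℕ)) → ∀ i, ((p i) : ℕ) < r) := by
  classical
  set s : Finset (Fin m) := Finset.univ.image p with hs
  have hcard : s.card = r := by
    rw [hs, Finset.card_image_of_injective _ hp, Finset.card_univ, Fintype.card_fin]
  set q := s.orderIsoOfFin hcard with hq
  have hmono : StrictMono fun i : Fin r => ((q i : Fin m) : ℕ) := by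
    intro a b hab
    have h1 : q a < q b := q.strictMono hab
    exact h1
  have hsum : (∑ i, ((p i) : ℕ)) = ∑ i : Fin r, ((q i : Fin m) : ℕ) := by
    have h1 : (∑ i, ((p i) : ℕ)) = ∑ x ∈ s, (x : ℕ) := by
      rw [hs, Finset.sum_image (fun x _ y _ h => hp h)]
    have h2 : ∑ x ∈ s, ((x : Fin m) : ℕ) = ∑ x : {x // x ∈ s}, ((x : Fin m) : ℕ) :=
      (Finset.sum_coe_sort s _).symm
    have h3 : ∑ x : {x // x ∈ s}, ((x : Fin m) : ℕ) = ∑ i : Fin r, ((q i : Fin m) : ℕ) :=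
      (Equiv.sum_comp q.toEquiv (fun x : {x // x ∈ s} => ((x : Fin m) : ℕ))).symm
    rw [h1, h2, h3]
  have hge : ∀ i : Fin r, (i : ℕ) ≤ ((q i : Fin m) : ℕ) := strictMono_le_nat _ hmono
  constructor
  · rw [hsum]; exact Finset.sum_le_sum fun i _ => hge i
  · intro hEq i
    have hEq2 : (∑ i : Fin r, (i : ℕ)) = ∑ i : Fin r, ((q i : Fin m) : ℕ) := by rw [← hsum, hEq]
    have hall := (Finset.sum_eq_sum_iff_of_le (fun i _ => hge i)).mp hEq2
    have hmem : p i ∈ s := by rw [hs]; exact Finset.mem_image_of_mem _ (Finset.mem_univ i)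
    set j := q.symm ⟨p i, hmem⟩ with hj
    have h5 : (q j : Fin m) = p i := by rw [hj]; simp
    have h6 : ((p i) : ℕ) = (j : ℕ) := by rw [← h5]; exact (hall j (Finset.mem_univ j)).symm
    rw [h6]; exact j.2



noncomputable def sig (ε : ℕ → ℝ) : ℕ → ℝ := fun j => if j = 0 then ε 1 else ε (j + 1) * ε j

theorem prod_sig (ε : ℕ → ℝ) (hsv : ∀ r, ε r = 1 ∨ ε r = -1) :
    ∀ r : ℕ, 1 ≤ r → (∏ i : Fin r, sig ε (i : ℕ)) = ε r := by
  intro r hr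
  induction r with
  | zero => omega
  | succ k ih =>
    by_cases hk : k = 0
    · subst hk; simp [sig]
    · rw [Fin.prod_univ_castSucc]
      have h1 : (∏ i : Fin k, sig ε ((Fin.castSucc i : Fin (k + 1)) : ℕ)) = ε k := by
        simpa using ih (by omega)
      have h2 : sig ε ((Fin.last k : Fin (k + 1)) : ℕ) = ε (k + 1) * ε k := by
        simp [sig, Fin.val_last, hk]
      rw [h1, h2]
      rcases hsv k with h | h <;> rw [h] <;> ring

noncomputable def Bmat (n : ℕ) : Matrix (Fin n) (Fin (n - 1)) ℝ :=
  fun i j => ((i : ℕ) : ℝ) ^ (j : ℕ)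

noncomputable def Amat (n : ℕ) (ε : ℕ → ℝ) (t : ℝ) : Matrix (Fin n) (Fin n) ℝ :=
  Bmat n * Matrix.diagonal (fun j : Fin (n - 1) => sig ε (j : ℕ) * t ^ (j : ℕ)) * (Bmat n)ᵀ

theorem vd_pos {n r : ℕ} (h2 : r ≤ n - 1) (f : Fin r → Fin n) (hf : StrictMono f) :
    0 < ((Bmat n).submatrix f (Fin.castLE h2)).det := by
  have hEq : (Bmat n).submatrix f (Fin.castLE h2) = Matrix.vandermonde (fun i => ((f i : ℕ) : ℝ)) := by
    ext i j; rfl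
  rw [hEq, Matrix.det_vandermonde]
  refine Finset.prod_pos fun i _ => Finset.prod_pos fun j hj => ?_
  have h3 : f i < f j := hf (Finset.mem_Ioi.mp hj)
  have h4 : ((f i : ℕ) : ℝ) < ((f j : ℕ) : ℝ) := by exact_mod_cast h3
  linarith


theorem minor_eventually {n : ℕ} (ε : ℕ → ℝ) (hsv : ∀ r, ε r = 1 ∨ ε r = -1) {r : ℕ}
    (h1 : 1 ≤ r) (h2 : r ≤ n - 1) (f g : Fin r → Fin n) (hf : StrictMono f) (hg : StrictMono g) :
    ∀ᶠ t in 𝓝[>] (0:ℝ), 0 < ε r * ((Amat n ε t).submatrix f g).det := by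
  classical
  set B := Bmat n with hB
  set L : ℕ := ∑ i : Fin r, (i : ℕ) with hLdef
  set C : (Fin r → Fin (n - 1)) → ℝ := fun p =>
    (∏ i, sig ε ((p i : ℕ))) * ((∏ i, B (g i) (p i)) * (B.submatrix f p).det) with hC
  set E : (Fin r → Fin (n - 1)) → ℕ := fun p => (∑ i, ((p i) : ℕ)) - L with hE
  set H : ℝ → ℝ := fun t => ∑ p : Fin r → Fin (n - 1), C p * t ^ E p with hH
  have hCzero : ∀ p : Fin r → Fin (n - 1), ¬ Function.Injective p → C p = 0 := by
    intro p hp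
    obtain ⟨a, b, hab, hne⟩ := Function.not_injective_iff.mp hp
    have hz : (B.submatrix f p).det = 0 :=
      Matrix.det_zero_of_column_eq hne (fun k => by simp [Matrix.submatrix_apply, hab])
    simp [hC, hz]
  have hdet : ∀ t : ℝ, ((Amat n ε t).submatrix f g).det
      = ∑ p : Fin r → Fin (n - 1), C p * t ^ (∑ i, ((p i) : ℕ)) := by
    intro t
    have hsub : (Amat n ε t).submatrix f g =
        (B.submatrix f id) * Matrix.diagonal (fun j : Fin (n - 1) => sig ε (j : ℕ) * t ^ (j : ℕ))
          * ((B.submatrix g id))ᵀ := by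
      ext i k
      simp [Amat, Matrix.mul_apply, Matrix.mul_diagonal, hB]
    rw [hsub, det_expand]
    refine Finset.sum_congr rfl fun p _ => ?_
    have e1 : (B.submatrix f id).submatrix id p = B.submatrix f p := by
      rw [Matrix.submatrix_submatrix]; simp
    have e2 : (∏ i, ((sig ε ((p i) : ℕ) * t ^ ((p i) : ℕ)) * (B.submatrix g id) i (p i)))
        = (∏ i, sig ε ((p i) : ℕ)) * (t ^ (∑ i, ((p i) : ℕ)) * ∏ i, B (g i) (p i)) := by
      rw [← Finset.prod_pow_eq_pow_sum, ← Finset.prod_mul_distrib, ← Finset.prod_mul_distrib]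
      exact Finset.prod_congr rfl fun i _ => by simp [Matrix.submatrix_apply]; ring
    rw [e1, e2, hC]; ring
  have hfact : ∀ t : ℝ, ((Amat n ε t).submatrix f g).det = t ^ L * H t := by
    intro t
    rw [hdet, hH, Finset.mul_sum]
    refine Finset.sum_congr rfl fun p _ => ?_
    by_cases hp : Function.Injective p
    · have hle := (inj_sum p hp).1
      have hsplit : (∑ i, ((p i) : ℕ)) = L + E p := by
        simp only [hE]; omega
      rw [hsplit, pow_add]; ring
    · rw [hCzero p hp]; ring
  have hH0 : H 0 = ε r * ((B.submatrix f (Fin.castLE h2)).det * (B.submatrix g (Fin.castLE h2)).det) := by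
    set ι : Fin r → Fin (n - 1) := Fin.castLE h2 with hι
    set U' := B.submatrix f ι with hU'
    set V' := B.submatrix g ι with hV'
    have hT1 : (U' * Matrix.diagonal (fun j : Fin r => sig ε (j : ℕ)) * V'ᵀ).det
        = ε r * (U'.det * V'.det) := by
      rw [Matrix.det_mul, Matrix.det_mul, Matrix.det_diagonal, Matrix.det_transpose,
        prod_sig ε hsv r h1]
      ring
    have hT2 : (U' * Matrix.diagonal (fun j : Fin r => sig ε (j : ℕ)) * V'ᵀ).det
        = ∑ q : Fin r → Fin r, (∏ i, (sig ε ((q i : ℕ)) * V' i (q i))) * (U'.submatrix id q).det :=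
      det_expand U' V' _
    have hιinj : Function.Injective ι := Fin.castLE_injective h2
    have hinj : ∀ x ∈ Finset.univ, ∀ y ∈ Finset.univ,
        (fun q : Fin r → Fin r => ι ∘ q) x = (fun q : Fin r → Fin r => ι ∘ q) y → x = y := by
      intro x _ y _ hxy
      funext i
      exact hιinj (congrFun hxy i)
    have step1 : H 0 = ∑ p ∈ Finset.univ.image (fun q : Fin r → Fin r => ι ∘ q),
        C p * (0:ℝ) ^ E p := by
      rw [hH]
      symm
      apply Finset.sum_subset (Finset.subset_univ _)
      intro p _ hpnot
      have hex : ¬ ∀ i, ((p i) : ℕ) < r := by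
        intro hall
        apply hpnot
        refine Finset.mem_image.mpr ⟨fun i => ⟨(p i : ℕ), hall i⟩, Finset.mem_univ _, ?_⟩
        funext i
        exact Fin.ext rfl
      by_cases hp : Function.Injective p
      · have h3 := inj_sum p hp
        have hne : (∑ i, ((p i) : ℕ)) ≠ L := fun hEq => hex (h3.2 hEq)
        have hlt : 0 < E p := by
          have := h3.1
          simp only [hE]; omega
        rw [zero_pow (by omega : E p ≠ 0), mul_zero]
      · rw [hCzero p hp, zero_mul]
    have step2 : ∑ p ∈ Finset.univ.image (fun q : Fin r → Fin r => ι ∘ q), C p * (0:ℝ) ^ E p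
        = ∑ q : Fin r → Fin r, (∏ i, (sig ε ((q i : ℕ)) * V' i (q i))) * (U'.submatrix id q).det := by
      rw [Finset.sum_image hinj]
      refine Finset.sum_congr rfl fun q _ => ?_
      have hU : B.submatrix f (ι ∘ q) = U'.submatrix id q := by
        rw [hU', Matrix.submatrix_submatrix]; simp
      by_cases hq : Function.Injective q
      · have hbij : Function.Bijective q :=
          (Fintype.bijective_iff_injective_and_card q).mpr ⟨hq, rfl⟩
        have hEq0 : E (ι ∘ q) = 0 := by
          have h7 : (∑ i, ((q i : ℕ))) = ∑ i : Fin r, (i : ℕ) :=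
            (Equiv.ofBijective q hbij).sum_comp (fun i : Fin r => (i : ℕ))
          have hs : (∑ i, ((ι (q i)) : ℕ)) = L := by
            simpa [hι, hLdef] using h7
          simp only [hE, Function.comp_apply]
          omega
        rw [hEq0, pow_zero, mul_one]
        have hCval : C (ι ∘ q)
            = (∏ i, sig ε ((q i : ℕ))) * ((∏ i, V' i (q i)) * (U'.submatrix id q).det) := by
          rw [hC]
          show (∏ i, sig ε (((ι ∘ q) i : ℕ))) * ((∏ i, B (g i) ((ι ∘ q) i))
              * (B.submatrix f (ι ∘ q)).det) = _
          rw [hU]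
          have e1 : (∏ i, sig ε (((ι ∘ q) i : ℕ))) = ∏ i, sig ε ((q i : ℕ)) :=
            Finset.prod_congr rfl fun i _ => rfl
          have e2 : (∏ i, B (g i) ((ι ∘ q) i)) = ∏ i, V' i (q i) :=
            Finset.prod_congr rfl fun i _ => rfl
          rw [e1, e2]
        rw [hCval, Finset.prod_mul_distrib]
        ring
      · have h0 : (U'.submatrix id q).det = 0 := by
          obtain ⟨a, b, hab, hne⟩ := Function.not_injective_iff.mp hq
          exact Matrix.det_zero_of_column_eq hne fun k => by simp [Matrix.submatrix_apply, hab]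
        have hpc : ¬ Function.Injective (ι ∘ q) := by
          intro hcomp
          exact hq (fun a b hab => hcomp (by simp [Function.comp, hab]))
        rw [hCzero _ hpc, h0, zero_mul, mul_zero]
    rw [step1, step2, ← hT2, hT1]
  have hcont : Continuous H := by
    rw [hH]
    exact continuous_finset_sum _ fun p _ => continuous_const.mul (continuous_pow _)
  have hVd : 0 < (B.submatrix f (Fin.castLE h2)).det * (B.submatrix g (Fin.castLE h2)).det :=
    mul_pos (vd_pos h2 f hf) (vd_pos h2 g hg)
  have hpos0 : 0 < ε r * H 0 := by
    rw [hH0]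
    rcases hsv r with h | h <;> rw [h] <;> nlinarith [hVd]
  have hev1 : ∀ᶠ t in 𝓝 (0:ℝ), 0 < ε r * H t :=
    Filter.Tendsto.eventually_const_lt hpos0 ((continuous_const.mul hcont).continuousAt)
  have hev2 : ∀ᶠ t in 𝓝[>] (0:ℝ), 0 < ε r * H t := hev1.filter_mono nhdsWithin_le_nhds
  have hev3 : ∀ᶠ t in 𝓝[>] (0:ℝ), 0 < t := by
    filter_upwards [self_mem_nhdsWithin] with t ht using ht
  filter_upwards [hev2, hev3] with t ht htpos
  rw [hfact t]
  have h4 : ε r * (t ^ L * H t) = t ^ L * (ε r * H t) := by ring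
  rw [h4]
  exact mul_pos (pow_pos htpos L) ht

theorem stmt17' {n : ℕ} (hn : 2 ≤ n) (ε : ℕ → ℝ) (hsv : ∀ r, ε r = 1 ∨ ε r = -1) :
    ∃ A : Matrix (Fin n) (Fin n) ℝ, A.rank = n - 1 ∧ A.det = 0 ∧
      ∀ r : ℕ, 1 ≤ r → r ≤ n - 1 → ∀ (f g : Fin r → Fin n),
        StrictMono f → StrictMono g → 0 < ε r * (A.submatrix f g).det := by
  classical
  have main : ∀ᶠ t in 𝓝[>] (0:ℝ), ∀ r ∈ Finset.Icc 1 (n - 1), ∀ f g : Fin r → Fin n,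
      StrictMono f → StrictMono g → 0 < ε r * ((Amat n ε t).submatrix f g).det := by
    rw [Filter.eventually_all_finset]
    intro r hr
    rw [Filter.eventually_all]
    intro f
    rw [Filter.eventually_all]
    intro g
    by_cases hf : StrictMono f
    · by_cases hg : StrictMono g
      · obtain ⟨hr1, hr2⟩ := Finset.mem_Icc.mp hr
        exact (minor_eventually ε hsv hr1 hr2 f g hf hg).mono fun t ht _ _ => ht
      · exact Filter.Eventually.of_forall fun t _ hg' => absurd hg' hg
    · exact Filter.Eventually.of_forall fun t hf' _ => absurd hf' hf
  have hev3 : ∀ᶠ t in 𝓝[>] (0:ℝ), 0 < t := by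
    filter_upwards [self_mem_nhdsWithin] with t ht using ht
  obtain ⟨t, htpos, hminors⟩ := (hev3.and main).exists
  have hm : ∀ r : ℕ, 1 ≤ r → r ≤ n - 1 → ∀ f g : Fin r → Fin n,
      StrictMono f → StrictMono g → 0 < ε r * ((Amat n ε t).submatrix f g).det :=
    fun r h1 h2 => hminors r (Finset.mem_Icc.mpr ⟨h1, h2⟩)
  have hle : n - 1 ≤ n := Nat.sub_le n 1
  have h1n : 1 ≤ n - 1 := by omega
  set f0 : Fin (n - 1) → Fin n := Fin.castLE hle with hf0
  have hdet0 : ((Amat n ε t).submatrix f0 f0).det ≠ 0 := by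
    have h5 := hm (n - 1) h1n le_rfl f0 f0 (Fin.strictMono_castLE hle) (Fin.strictMono_castLE hle)
    intro h
    rw [h, mul_zero] at h5
    exact lt_irrefl _ h5
  have hrank_ge : n - 1 ≤ (Amat n ε t).rank := by
    have hPQ : (Amat n ε t).submatrix f0 f0
        = ((1 : Matrix (Fin n) (Fin n) ℝ).submatrix f0 ⇑(Equiv.refl (Fin n)))
          * ((Amat n ε t) * (1 : Matrix (Fin n) (Fin n) ℝ).submatrix ⇑(Equiv.refl (Fin n)) f0) := by
      rw [Matrix.mul_submatrix_one, Matrix.one_submatrix_mul]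
      simp [Matrix.submatrix_submatrix]
    have hr1 : ((Amat n ε t).submatrix f0 f0).rank = n - 1 := by
      rw [Matrix.rank_of_isUnit _ ((Matrix.isUnit_iff_isUnit_det _).mpr
        (isUnit_iff_ne_zero.mpr hdet0)), Fintype.card_fin]
    calc n - 1 = ((Amat n ε t).submatrix f0 f0).rank := hr1.symm
      _ ≤ _ := by
          rw [hPQ]
          exact le_trans (Matrix.rank_mul_le_right _ _) (Matrix.rank_mul_le_left _ _)
  have hrank_le : (Amat n ε t).rank ≤ n - 1 := by
    calc (Amat n ε t).rank
        ≤ (Bmat n * Matrix.diagonal (fun j : Fin (n - 1) => sig ε (j : ℕ) * t ^ (j : ℕ))).rank :=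
          Matrix.rank_mul_le_left _ _
      _ ≤ Fintype.card (Fin (n - 1)) := Matrix.rank_le_card_width _
      _ = n - 1 := Fintype.card_fin _
  have hrank : (Amat n ε t).rank = n - 1 := le_antisymm hrank_le hrank_ge
  have hdetA : (Amat n ε t).det = 0 := by
    by_contra hne
    have h6 : IsUnit (Amat n ε t) :=
      (Matrix.isUnit_iff_isUnit_det _).mpr (isUnit_iff_ne_zero.mpr hne)
    have h7 := Matrix.rank_of_isUnit _ h6
    rw [hrank, Fintype.card_fin] at h7
    omega
  exact ⟨Amat n ε t, hrank, hdetA, hm⟩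


end Stmt17Aux


theorem stmt17 {n : ℕ} (hn : 2 ≤ n) (ε : ℕ → ℝ) (hsv : ∀ r, ε r = 1 ∨ ε r = -1) :
    ∃ A : Matrix (Fin n) (Fin n) ℝ, A.rank = n - 1 ∧ A.det = 0 ∧
      ∀ r : ℕ, 1 ≤ r → r ≤ n - 1 → ∀ (f g : Fin r → Fin n),
        StrictMono f → StrictMono g → 0 < ε r * (A.submatrix f g).det := by
  exact Stmt17Aux.stmt17' hn ε hsv
end

section
/- Let A be an m×n SSR matrix and let x ∈ ℝ^n be nonzero with S^-(x) = r, partitioned into r+1 maximal contiguous blocks with alternating signs (the nonzero entries of the k-th block having sign (−1)^{k−1}). Define Y ∈ ℝ^{m×(r+1)} whose j-th column is y^j := Σ_{k in block j} |x_k| a^k, where a^k is the k-th column of A. Then Y is SSR with the same sign pattern as A (for orders up to min{m, r+1}), and Ax = Y·(1,−1,…,(−1)^r)^T. -/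
open Matrix Filter

theorem stmt18 {m n : ℕ} (A : Matrix (Fin m) (Fin n) ℝ) (ε : ℕ → ℝ)
    (hsv : ∀ p, ε p = 1 ∨ ε p = -1) (hA : ssrPattern A ε)
    (x : Fin n → ℝ) (hx : x ≠ 0) (r : ℕ) (hr : Sm x = r)
    (s : ℕ → ℕ) (hs0 : s 0 = 0) (hslast : s (r + 1) = n)
    (hsmono : ∀ j, j ≤ r → s j < s (j + 1))
    (hsign : ∀ j, j ≤ r → ∀ k : Fin n, s j ≤ (k : ℕ) → (k : ℕ) < s (j + 1) →
      0 ≤ (-1 : ℝ) ^ j * x k)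
    (hnz : ∀ j, j ≤ r → ∃ k : Fin n, s j ≤ (k : ℕ) ∧ (k : ℕ) < s (j + 1) ∧ x k ≠ 0)
    (Y : Matrix (Fin m) (Fin (r + 1)) ℝ)
    (hY : ∀ i j, Y i j = ∑ k : Fin n,
      if s (j : ℕ) ≤ (k : ℕ) ∧ (k : ℕ) < s ((j : ℕ) + 1) then |x k| * A i k else 0) :
    (∀ p : ℕ, 1 ≤ p → p ≤ min m (r + 1) →
      ∀ (f : Fin p → Fin m) (g : Fin p → Fin (r + 1)),
        StrictMono f → StrictMono g → 0 < ε p * (Y.submatrix f g).det) ∧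
      A *ᵥ x = Y *ᵥ (fun j => (-1 : ℝ) ^ (j : ℕ)) := by
  classical
  -- monotonicity facts about s
  have hsm : ∀ a b : ℕ, a ≤ b → b ≤ r + 1 → s a ≤ s b := by
    intro a b hab hb
    induction b with
    | zero =>
      have : a = 0 := by omega
      rw [this]
    | succ b ih =>
      rcases Nat.eq_or_lt_of_le hab with h | h
      · rw [h]
      · have h1 := hsmono b (by omega)
        have h2 := ih (by omega) (by omega)
        omega
  have hsge : ∀ j : ℕ, j ≤ r + 1 → j ≤ s j := by
    intro j hj
    induction j with
    | zero => omega
    | succ j ih =>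
      have h1 := hsmono j (by omega)
      have h2 := ih (by omega)
      omega
  have hrn : r + 1 ≤ n := by
    have := hsge (r + 1) le_rfl
    omega
  -- every index lies in a unique block
  have hblock : ∀ k : Fin n, ∃ j : ℕ, j ≤ r ∧ s j ≤ (k : ℕ) ∧ (k : ℕ) < s (j + 1) := by
    intro k
    set j0 := Nat.findGreatest (fun j => s j ≤ (k : ℕ)) r with hj0
    have h0 : s 0 ≤ (k : ℕ) := by omega
    have hspec : s j0 ≤ (k : ℕ) :=
      Nat.findGreatest_spec (P := fun j => s j ≤ (k : ℕ)) (Nat.zero_le r) h0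
    have hle : j0 ≤ r := Nat.findGreatest_le r
    refine ⟨j0, hle, hspec, ?_⟩
    rcases Nat.eq_or_lt_of_le hle with h | h
    · rw [h]
      have := k.isLt
      omega
    · have hgr := Nat.findGreatest_is_greatest (P := fun j => s j ≤ (k : ℕ)) (k := j0 + 1)
        (Nat.lt_succ_self j0) (by omega)
      omega
  have huniq : ∀ j1 j2 : ℕ, j1 ≤ r → j2 ≤ r → ∀ kk : ℕ,
      s j1 ≤ kk → kk < s (j1 + 1) → s j2 ≤ kk → kk < s (j2 + 1) → j1 = j2 := by
    intro j1 j2 h1 h2 kk a b cc d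
    by_contra hne
    rcases Nat.lt_or_ge j1 j2 with h | h
    · have := hsm (j1 + 1) j2 (by omega) (by omega); omega
    · have := hsm (j2 + 1) j1 (by omega) (by omega); omega
  constructor
  · -- SSR part
    intro p hp1 hp2 f g hf hg
    have hpm : p ≤ m := le_trans hp2 (Nat.min_le_left _ _)
    have hpr : p ≤ r + 1 := le_trans hp2 (Nat.min_le_right _ _)
    have hpn : p ≤ n := le_trans hpr hrn
    set c : Fin (r + 1) → Fin n → ℝ := fun j k =>
      if s (j : ℕ) ≤ (k : ℕ) ∧ (k : ℕ) < s ((j : ℕ) + 1) then |x k| else 0 with hc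
    set col : Fin n → Fin p → ℝ := fun k i => A (f i) k with hcol
    have hdet : (Y.submatrix f g).det
        = ∑ φ : Fin p → Fin n, (∏ j, c (g j) (φ j)) * (A.submatrix f φ).det := by
      rw [← Matrix.det_transpose]
      have h1 : ((Y.submatrix f g)ᵀ : Matrix (Fin p) (Fin p) ℝ)
          = fun j => ∑ k : Fin n, c (g j) k • col k := by
        funext j i
        show Y (f i) (g j) = _
        rw [hY]
        rw [show (∑ k : Fin n, c (g j) k • col k) i
            = ∑ k : Fin n, c (g j) k * col k i from by
          rw [Finset.sum_apply]; simp [smul_eq_mul]]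
        refine Finset.sum_congr rfl fun k _ => ?_
        by_cases hk : s ((g j : ℕ)) ≤ (k : ℕ) ∧ (k : ℕ) < s ((g j : ℕ) + 1)
        · simp [hc, hcol, hk]
        · simp [hc, hcol, hk]
      show Matrix.detRowAlternating _ = _
      rw [h1]
      rw [← AlternatingMap.coe_multilinearMap (Matrix.detRowAlternating (R := ℝ) (n := Fin p))]
      rw [(Matrix.detRowAlternating (R := ℝ) (n := Fin p)).toMultilinearMap.map_sum
        (fun j k => c (g j) k • col k)]
      refine Finset.sum_congr rfl fun φ _ => ?_
      rw [(Matrix.detRowAlternating (R := ℝ) (n := Fin p)).toMultilinearMap.map_smul_univ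
        (fun j => c (g j) (φ j)) (fun j => col (φ j))]
      rw [smul_eq_mul]
      congr 1
      rw [← Matrix.det_transpose (A.submatrix f φ)]
      rfl
    -- strict monotonicity of selections within blocks
    have hmonoφ : ∀ φ : Fin p → Fin n,
        (∀ j, s ((g j : ℕ)) ≤ (φ j : ℕ) ∧ (φ j : ℕ) < s ((g j : ℕ) + 1)) → StrictMono φ := by
      intro φ h j1 j2 hlt
      have hg12 : (g j1 : ℕ) < (g j2 : ℕ) := hg hlt
      have h1 := (h j1).2
      have h2 := (h j2).1
      have h3 : s ((g j1 : ℕ) + 1) ≤ s ((g j2 : ℕ)) :=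
        hsm _ _ (by omega) (by have := (g j2).isLt; omega)
      exact Fin.lt_def.mpr (by omega)
    have hterm : ∀ φ : Fin p → Fin n,
        0 ≤ ε p * ((∏ j, c (g j) (φ j)) * (A.submatrix f φ).det) := by
      intro φ
      by_cases hz : ∏ j, c (g j) (φ j) = 0
      · rw [hz]; simp
      · have hne : ∀ j, c (g j) (φ j) ≠ 0 := fun j =>
          Finset.prod_ne_zero_iff.mp hz j (Finset.mem_univ j)
        have hblk : ∀ j, s ((g j : ℕ)) ≤ (φ j : ℕ) ∧ (φ j : ℕ) < s ((g j : ℕ) + 1) := by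
          intro j
          by_contra hcon
          exact hne j (by simp [hc, hcon])
        have hpos : 0 < ∏ j, c (g j) (φ j) := by
          refine Finset.prod_pos fun j _ => ?_
          have hceq : c (g j) (φ j) = |x (φ j)| := by simp [hc, hblk j]
          rw [hceq]
          exact abs_pos.mpr fun h => hne j (by rw [hceq, h, abs_zero])
        have hdpos : 0 < ε p * (A.submatrix f φ).det :=
          hA p hp1 (le_min hpm hpn) f φ hf (hmonoφ φ hblk)
        calc (0:ℝ) ≤ (∏ j, c (g j) (φ j)) * (ε p * (A.submatrix f φ).det) :=
              le_of_lt (mul_pos hpos hdpos)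
          _ = ε p * ((∏ j, c (g j) (φ j)) * (A.submatrix f φ).det) := by ring
    -- witness selection with nonzero x entries
    obtain ⟨φ0, hφ0⟩ : ∃ φ0 : Fin p → Fin n, ∀ j,
        s ((g j : ℕ)) ≤ (φ0 j : ℕ) ∧ (φ0 j : ℕ) < s ((g j : ℕ) + 1) ∧ x (φ0 j) ≠ 0 := by
      choose φ0 h1 h2 h3 using fun j : Fin p =>
        hnz ((g j : ℕ)) (Nat.lt_succ_iff.mp (g j).isLt)
      exact ⟨φ0, fun j => ⟨h1 j, h2 j, h3 j⟩⟩
    have hwit : 0 < ε p * ((∏ j, c (g j) (φ0 j)) * (A.submatrix f φ0).det) := by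
      have hpos : 0 < ∏ j, c (g j) (φ0 j) := by
        refine Finset.prod_pos fun j _ => ?_
        have : c (g j) (φ0 j) = |x (φ0 j)| := by simp [hc, (hφ0 j).1, (hφ0 j).2.1]
        rw [this]
        exact abs_pos.mpr (hφ0 j).2.2
      have hdpos : 0 < ε p * (A.submatrix f φ0).det :=
        hA p hp1 (le_min hpm hpn) f φ0 hf
          (hmonoφ φ0 fun j => ⟨(hφ0 j).1, (hφ0 j).2.1⟩)
      calc (0:ℝ) < (∏ j, c (g j) (φ0 j)) * (ε p * (A.submatrix f φ0).det) :=
            mul_pos hpos hdpos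
        _ = _ := by ring
    rw [hdet, Finset.mul_sum]
    exact Finset.sum_pos' (fun φ _ => hterm φ) ⟨φ0, Finset.mem_univ _, hwit⟩
  · -- A *ᵥ x = Y *ᵥ signs
    funext i
    show ∑ k, A i k * x k = ∑ j : Fin (r + 1), Y i j * (-1 : ℝ) ^ (j : ℕ)
    have hrhs : ∑ j : Fin (r + 1), Y i j * (-1 : ℝ) ^ (j : ℕ)
        = ∑ k : Fin n, ∑ j : Fin (r + 1),
          (if s ((j : ℕ)) ≤ (k : ℕ) ∧ (k : ℕ) < s ((j : ℕ) + 1)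
            then |x k| * A i k * (-1 : ℝ) ^ (j : ℕ) else 0) := by
      rw [Finset.sum_comm]
      refine Finset.sum_congr rfl fun j _ => ?_
      rw [hY, Finset.sum_mul]
      refine Finset.sum_congr rfl fun k _ => ?_
      by_cases hk : s ((j : ℕ)) ≤ (k : ℕ) ∧ (k : ℕ) < s ((j : ℕ) + 1)
      · simp [hk]
      · simp [hk]
    rw [hrhs]
    refine Finset.sum_congr rfl fun k _ => ?_
    obtain ⟨j0, hj0r, hj1, hj2⟩ := hblock k
    have hj0lt : j0 < r + 1 := by omega
    rw [Finset.sum_eq_single (⟨j0, hj0lt⟩ : Fin (r + 1))]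
    · simp only []
      have hsg := hsign j0 hj0r k hj1 hj2
      have habs : |x k| = (-1 : ℝ) ^ j0 * x k := by
        calc |x k| = |(-1 : ℝ) ^ j0 * x k| := by
              rw [abs_mul, abs_pow, abs_neg, abs_one, one_pow, one_mul]
          _ = (-1 : ℝ) ^ j0 * x k := abs_of_nonneg hsg
      have he : ((-1 : ℝ) ^ j0) * ((-1 : ℝ) ^ j0) = 1 := by
        rw [← pow_add]
        exact Even.neg_one_pow ⟨j0, rfl⟩
      rw [if_pos ⟨hj1, hj2⟩, habs]
      push_cast
      linear_combination (-(x k * A i k)) * he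
    · intro j _ hjne
      rw [if_neg]
      intro hcon
      exact hjne (Fin.ext (huniq (j : ℕ) j0 (Nat.lt_succ_iff.mp j.isLt) hj0r (k : ℕ)
        hcon.1 hcon.2 hj1 hj2))
    · intro h
      exact absurd (Finset.mem_univ _) h
end

section
/- Let n ≥ 2, and let A be an n×n matrix that is SSR_{n−1}(ε) for ε = (ε_1,…,ε_{n−1}). Let x_0 ∈ ℝ^n have no zero entries and at least two consecutive coordinates of the same sign (so x_0 does not lie in the alternating bi-orthant). Then S^+(A x_0) ≤ S^-(x_0). -/
open Matrix Filter

/-!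
Split `x0` into its `d + 1` maximal blocks of constant sign, `d = S⁻(x0)`. Then `x0 = P z` with
`P ≥ 0` carrying `|x0|` on the blocks and `z` alternating, so `A x0 = (A P) z`. Two consecutive
entries of equal sign give `d + 1 ≤ n - 1`, and by Cauchy–Binet each maximal minor of the
`n × (d + 1)` matrix `A P` is a positive combination of `(d + 1)`-minors of `A`, hence of sign
`ε_{d+1}`. Finally, if all maximal minors of `B` share a strict sign, `S⁺(B z)` is at most the
number of columns of `B` minus one for `z ≠ 0`.
-/

open Finset

lemma signChanges_cons (a : ℝ) (l : List ℝ) :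
    signChanges (a :: l) = (if a * l.headI < 0 then 1 else 0) + signChanges l := by
  cases l with
  | nil => simp [signChanges, default]
  | cons b l =>
    simp only [signChanges, List.tail_cons, List.zip_cons_cons, List.countP_cons, List.headI]
    by_cases h : a * b < 0 <;> simp [h, add_comm]

lemma Sm_eq_signChanges {n : ℕ} {v : Fin n → ℝ} (hv : ∀ i, v i ≠ 0) :
    Sm v = signChanges (List.ofFn v) := by
  rw [Sm, List.filter_eq_self.mpr]
  simpa [List.mem_ofFn] using hv

noncomputable def signChangeCount (u : ℕ → ℝ) (i : ℕ) : ℕ :=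
  ∑ k ∈ range i, if u k * u (k + 1) < 0 then 1 else 0

section signChangeCount

variable (u : ℕ → ℝ)

lemma signChangeCount_succ (i : ℕ) :
    signChangeCount u (i + 1) = signChangeCount u i + if u i * u (i + 1) < 0 then 1 else 0 :=
  sum_range_succ _ _

lemma signChangeCount_monotone : Monotone (signChangeCount u) :=
  fun _ _ h => sum_le_sum_of_subset (range_subset_range.mpr h)

lemma signChanges_ofFn (m : ℕ) :
    signChanges (List.ofFn fun i : Fin (m + 1) => u i) = signChangeCount u m := by
  induction m generalizing u with
  | zero => simp [signChanges, signChangeCount]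
  | succ m ih =>
    have hshift : signChangeCount u (m + 1) =
        (if u 0 * u 1 < 0 then 1 else 0) + signChangeCount (fun k => u (k + 1)) m :=
      sum_range_succ' _ _ |>.trans (add_comm _ _)
    rw [List.ofFn_succ, hshift, ← ih (fun k => u (k + 1)), signChanges_cons]
    simp [List.ofFn_succ]

lemma exists_signChangeCount_eq {m c : ℕ} (hc : c ≤ signChangeCount u m) :
    ∃ i ≤ m, signChangeCount u i = c := by
  induction m with
  | zero => exact ⟨0, le_rfl, by simp [signChangeCount] at hc ⊢; omega⟩
  | succ m ih =>
    by_cases h : c ≤ signChangeCount u m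
    · obtain ⟨i, hi, rfl⟩ := ih h
      exact ⟨i, by omega, rfl⟩
    · refine ⟨m + 1, le_rfl, ?_⟩
      rw [signChangeCount_succ] at hc ⊢
      split_ifs at hc ⊢ <;> omega

lemma signChangeCount_lt {m i : ℕ} (hi : i < m) (hui : 0 ≤ u i * u (i + 1)) :
    signChangeCount u m < m := by
  calc signChangeCount u m < ∑ _k ∈ range m, 1 := by
        refine sum_lt_sum (fun k _ => by split_ifs <;> omega) ⟨i, mem_range.mpr hi, ?_⟩
        simp [not_lt.mpr hui]
    _ = m := by simp

/-- Between two consecutive nonzero entries, the sign flips exactly when the count goes up. -/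
lemma pos_mul_neg_one_pow_signChangeCount {m : ℕ} (hu : ∀ i ≤ m, u i ≠ 0) :
    ∀ i ≤ m, 0 < u 0 * ((-1) ^ signChangeCount u i * u i) := by
  intro i
  induction i with
  | zero => simpa [signChangeCount, mul_self_pos] using hu 0 (Nat.zero_le m)
  | succ i ih =>
    intro hi
    have hprev := ih (by omega)
    set s : ℝ := if u i * u (i + 1) < 0 then -1 else 1
    have hflip : 0 < s * (u i * u (i + 1)) := by
      have := mul_ne_zero (hu i (by omega)) (hu (i + 1) hi)
      simp only [s]; split_ifs with h
      · linarith
      · rw [one_mul]; exact lt_of_le_of_ne (not_lt.mp h) this.symm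
    have hpow : (-1 : ℝ) ^ signChangeCount u (i + 1) = (-1) ^ signChangeCount u i * s := by
      rw [signChangeCount_succ, pow_add]; simp only [s]; split_ifs <;> simp
    refine pos_of_mul_pos_left (b := u 0 * ((-1) ^ signChangeCount u i * u i)) ?_ hprev.le
    calc 0 < (u 0 * (-1) ^ signChangeCount u i) ^ 2 * (s * (u i * u (i + 1))) := by
          have : u 0 * (-1) ^ signChangeCount u i ≠ 0 := by
            simpa using hu 0 (Nat.zero_le m)
          positivity
      _ = _ := by rw [hpow]; ring

end signChangeCount

lemma strictMono_of_monotone_comp {α β γ : Type*} [Preorder α] [LinearOrder β] [Preorder γ]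
    {f : β → γ} {g : α → β} (hf : Monotone f) (hfg : StrictMono (f ∘ g)) : StrictMono g :=
  fun _ _ hab => lt_of_not_ge fun hba => (hfg hab).not_ge (hf hba)

lemma exists_strictMono_alternating {m k : ℕ} (w : Fin (m + 1) → ℝ) (hw : ∀ i, w i ≠ 0)
    (hk : k ≤ signChanges (List.ofFn w)) :
    ∃ j : Fin (k + 1) → Fin (m + 1), StrictMono j ∧
      ∀ t : Fin (k + 1), 0 < w 0 * ((-1) ^ (t : ℕ) * w (j t)) := by
  set u : ℕ → ℝ := fun i => w (Fin.ofNat (m + 1) i)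
  have hwu : w = fun i : Fin (m + 1) => u i := by funext i; simp [u]
  rw [hwu, signChanges_ofFn] at hk
  have hlevel (t : Fin (k + 1)) : ∃ i ≤ m, signChangeCount u i = t :=
    exists_signChangeCount_eq u (by omega)
  choose i hi hit using hlevel
  refine ⟨fun t => ⟨i t, by have := hi t; omega⟩, ?_, fun t => ?_⟩
  · refine strictMono_of_monotone_comp (f := fun l : Fin (m + 1) => signChangeCount u l)
      (fun a b hab => signChangeCount_monotone u hab) ?_
    convert Fin.val_strictMono using 1
    exact funext hit
  · have := pos_mul_neg_one_pow_signChangeCount u (fun i _ => by simp [u, hw]) (i t) (hi t)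
    rw [hit] at this
    convert this using 4 <;> simp [Fin.ext_iff, Nat.mod_eq_of_lt (Nat.lt_succ_of_le (hi t))]

/-- Each column sum is the expansion along the first column of a determinant with a repeated
column. -/
lemma vecMul_signedMaximalMinors_eq_zero {R : Type*} [CommRing R] {m : ℕ}
    (B : Matrix (Fin (m + 2)) (Fin (m + 1)) R) :
    (fun t : Fin (m + 2) => (-1) ^ (t : ℕ) * (B.submatrix t.succAbove id).det) ᵥ* B = 0 := by
  funext j
  let D : Matrix (Fin (m + 2)) (Fin (m + 2)) R := Matrix.of fun t => Fin.cons (B t j) (B t)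
  have hD : D.det = 0 :=
    Matrix.det_zero_of_column_eq (i := 0) (j := j.succ) (Fin.succ_ne_zero j).symm
      (fun t => by simp [D])
  rw [Matrix.det_succ_column_zero] at hD
  rw [Pi.zero_apply, ← hD, Matrix.vecMul, dotProduct]
  refine sum_congr rfl fun t _ => ?_
  have : D.submatrix t.succAbove Fin.succ = B.submatrix t.succAbove id := by
    ext a b; simp [D]
  rw [this]
  simp [D]
  ring

def blockMatrix {n k : ℕ} (β : Fin n → Fin k) (c : Fin n → ℝ) : Matrix (Fin n) (Fin k) ℝ :=
  Matrix.of fun l j => if β l = j then c l else 0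

lemma blockMatrix_mulVec {n k : ℕ} (β : Fin n → Fin k) (c : Fin n → ℝ) (z : Fin k → ℝ) :
    blockMatrix β c *ᵥ z = fun l => c l * z (β l) := by
  funext l
  simp [blockMatrix, Matrix.mulVec, dotProduct, ite_mul]

/-- Cauchy–Binet for a block matrix: only the transversals `g` of the blocks contribute, and
these are strictly monotone since the blocks are ordered. -/
lemma det_mul_blockMatrix_pos {n k : ℕ} (M : Matrix (Fin k) (Fin n) ℝ) (e : ℝ)
    (hM : ∀ g : Fin k → Fin n, StrictMono g → 0 < e * (M.submatrix id g).det)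
    {β : Fin n → Fin k} (hβ : Monotone β) (hsurj : Function.Surjective β)
    {c : Fin n → ℝ} (hc : ∀ l, 0 < c l) :
    0 < e * (M * blockMatrix β c).det := by
  classical
  let term : (Fin k → Fin n) → ℝ := fun g =>
    (∏ j, blockMatrix β c (g j) j) * (M.submatrix id g).det
  have hexpand : (M * blockMatrix β c).det = ∑ g, term g := by
    have hrows : (M * blockMatrix β c)ᵀ = fun j => ∑ l, blockMatrix β c l j • Mᵀ l := by
      ext j i; simp [Matrix.mul_apply, mul_comm]
    rw [← Matrix.det_transpose, hrows]
    change Matrix.detRowAlternating.toMultilinearMap _ = _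
    rw [MultilinearMap.map_sum]
    refine sum_congr rfl fun g _ => ?_
    rw [MultilinearMap.map_smul_univ, smul_eq_mul]
    exact congrArg _ (Matrix.det_transpose (M.submatrix id g))
  have hterm_pos {g : Fin k → Fin n} (hg : Function.LeftInverse β g) : 0 < e * term g := by
    have hprod : 0 < ∏ j, blockMatrix β c (g j) j :=
      prod_pos fun j _ => by simpa [blockMatrix, hg j] using hc (g j)
    have := mul_pos hprod (hM g (strictMono_of_monotone_comp hβ (hg.comp_eq_id ▸ strictMono_id)))
    simp only [term]; linarith
  have hterm_nonneg (g : Fin k → Fin n) : 0 ≤ e * term g := by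
    by_cases hg : Function.LeftInverse β g
    · exact (hterm_pos hg).le
    · obtain ⟨j, hj⟩ : ∃ j, β (g j) ≠ j := by simpa [Function.LeftInverse] using hg
      have : ∏ j, blockMatrix β c (g j) j = 0 :=
        prod_eq_zero (mem_univ j) (by simp [blockMatrix, hj])
      simp [term, this]
  rw [hexpand, mul_sum]
  exact sum_pos' (fun g _ => hterm_nonneg g)
    ⟨_, mem_univ _, hterm_pos (Function.rightInverse_surjInv hsurj)⟩

lemma exists_alternating_of_lt_Sp {N m : ℕ} {y : Fin (N + 1) → ℝ} (hy : y ≠ 0) (h : m < Sp y) :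
    ∃ j : Fin (m + 2) → Fin (N + 1), StrictMono j ∧
      ∃ θ : ℝ, θ ≠ 0 ∧ ∀ t : Fin (m + 2), 0 ≤ θ * ((-1) ^ (t : ℕ) * y (j t)) := by
  rw [Sp, if_neg hy] at h
  obtain ⟨σ, -, hσ⟩ := Finset.lt_sup_iff.mp h
  set w : Fin (N + 1) → ℝ := fun i => if y i = 0 then (if σ i then 1 else -1) else y i
  have hw (i : Fin (N + 1)) : w i ≠ 0 := by
    simp only [w]; split_ifs <;> simp_all
  obtain ⟨j, hj, halt⟩ := exists_strictMono_alternating w hw (k := m + 1) hσ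
  refine ⟨j, hj, w 0, hw 0, fun t => ?_⟩
  by_cases h0 : y (j t) = 0
  · simp [h0]
  · simpa [w, h0] using (halt t).le

/-- An alternating sign pattern of `B z` on `m + 2` rows would make the cofactor expansion of
`B z` against those rows a sum of terms of one sign; it vanishes, so `B z` vanishes on these rows,
and then `z = 0` since the minor on the first `m + 1` of them is nonzero. -/
theorem Sp_mulVec_le {n m : ℕ} (hmn : m < n) (B : Matrix (Fin n) (Fin (m + 1)) ℝ) (e : ℝ)
    (hB : ∀ f : Fin (m + 1) → Fin n, StrictMono f → 0 < e * (B.submatrix f id).det)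
    {z : Fin (m + 1) → ℝ} (hz : z ≠ 0) : Sp (B *ᵥ z) ≤ m := by
  obtain ⟨N, rfl⟩ : ∃ N, n = N + 1 := ⟨n - 1, by omega⟩
  set y := B *ᵥ z
  have hdet_ne {f : Fin (m + 1) → Fin (N + 1)} (hf : StrictMono f) : (B.submatrix f id).det ≠ 0 :=
    fun h0 => by simpa [h0] using hB f hf
  have hrestrict {f : Fin (m + 1) → Fin (N + 1)} (hf : StrictMono f) : ∃ t, y (f t) ≠ 0 := by
    by_contra! h
    exact hz (Matrix.eq_zero_of_mulVec_eq_zero (hdet_ne hf) (funext h))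
  have hy : y ≠ 0 := fun h0 => by
    obtain ⟨t, ht⟩ := hrestrict (Fin.strictMono_castLE (by omega))
    exact ht (by simp [h0])
  by_contra! hlt
  obtain ⟨j, hj, θ, hθ, halt⟩ := exists_alternating_of_lt_Sp hy hlt
  have hminor (t : Fin (m + 2)) : 0 < e * (B.submatrix (j ∘ t.succAbove) id).det :=
    hB _ (hj.comp (Fin.strictMono_succAbove t))
  set c : Fin (m + 2) → ℝ := fun t => (-1) ^ (t : ℕ) * (B.submatrix (j ∘ t.succAbove) id).det
  have hsum : ∑ t, (θ * e) * (c t * y (j t)) = 0 := by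
    have : c ⬝ᵥ (B.submatrix j id *ᵥ z) = 0 := by
      rw [dotProduct_mulVec]
      exact (congrArg (· ⬝ᵥ z) (vecMul_signedMaximalMinors_eq_zero (B.submatrix j id))).trans
        (zero_dotProduct z)
    rw [← mul_sum]
    exact mul_eq_zero_of_right _ this
  have hnonneg (t : Fin (m + 2)) : 0 ≤ (θ * e) * (c t * y (j t)) :=
    (mul_nonneg (hminor t).le (halt t)).trans_eq (by simp only [c]; ring)
  have hzero := (sum_eq_zero_iff_of_nonneg fun t _ => hnonneg t).mp hsum
  obtain ⟨t, ht⟩ := hrestrict (hj.comp Fin.strictMono_castSucc)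
  have he : e ≠ 0 := by rintro rfl; simpa using hminor 0
  have hyt := hzero t.castSucc (mem_univ _)
  exact ht (by simpa [hθ, he, c, hdet_ne (hj.comp (Fin.strictMono_succAbove _))] using hyt)

section Factorization

variable {m : ℕ} {x : Fin (m + 1) → ℝ}

lemma Sm_eq_signChangeCount (hx : ∀ i, x i ≠ 0) :
    Sm x = signChangeCount (fun k => x (Fin.ofNat (m + 1) k)) m := by
  rw [Sm_eq_signChanges hx, ← signChanges_ofFn]
  simp

lemma Sm_lt_of_pos_mul (hx : ∀ i, x i ≠ 0) {i j : Fin (m + 1)} (hij : (j : ℕ) = i + 1)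
    (hpos : 0 < x i * x j) : Sm x < m := by
  have hjm := j.isLt
  rw [Sm_eq_signChangeCount hx]
  refine signChangeCount_lt _ (i := i) (by omega) ?_
  have hj : Fin.ofNat (m + 1) (i + 1) = j := by ext; simp [hij]; omega
  simpa only [Fin.ofNat_val_eq_self, hj] using hpos.le

lemma exists_blockMatrix_mulVec_eq (hx : ∀ i, x i ≠ 0) :
    ∃ (β : Fin (m + 1) → Fin (Sm x + 1)) (c : Fin (m + 1) → ℝ) (z : Fin (Sm x + 1) → ℝ),
      Monotone β ∧ Function.Surjective β ∧ (∀ l, 0 < c l) ∧ z ≠ 0 ∧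
        blockMatrix β c *ᵥ z = x := by
  set u : ℕ → ℝ := fun k => x (Fin.ofNat (m + 1) k)
  have hSm : Sm x = signChangeCount u m := Sm_eq_signChangeCount hx
  have hlt (l : Fin (m + 1)) : signChangeCount u l < Sm x + 1 := by
    have := signChangeCount_monotone u (Nat.le_of_lt_succ l.isLt)
    omega
  have hsign (l : Fin (m + 1)) : 0 < x 0 * ((-1) ^ signChangeCount u l * x l) := by
    simpa [u] using
      pos_mul_neg_one_pow_signChangeCount u (fun k _ => hx _) l (Nat.le_of_lt_succ l.isLt)
  refine ⟨fun l => ⟨signChangeCount u l, hlt l⟩,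
    fun l => x 0 * ((-1) ^ signChangeCount u l * x l), fun j => (-1) ^ (j : ℕ) / x 0, fun a b hab => signChangeCount_monotone u hab,
    fun j => ?_, hsign, fun h => by simpa [hx 0] using congrFun h 0, ?_⟩
  · obtain ⟨i, hi, hij⟩ := exists_signChangeCount_eq u (m := m) (c := j) (by omega)
    exact ⟨⟨i, by omega⟩, Fin.ext hij⟩
  · funext l
    have hpow : ((-1 : ℝ) ^ signChangeCount u l) ^ 2 = 1 := by
      rw [← pow_mul, mul_comm, pow_mul]; simp
    rw [blockMatrix_mulVec]
    field_simp [hx 0]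
    linear_combination x l * hpow

end Factorization

theorem stmt19_general {n : ℕ} (A : Matrix (Fin n) (Fin n) ℝ) (ε : ℕ → ℝ)
    (hA : ∀ r : ℕ, 1 ≤ r → r ≤ n - 1 → ∀ (f g : Fin r → Fin n),
      StrictMono f → StrictMono g → 0 < ε r * (A.submatrix f g).det)
    (x0 : Fin n → ℝ) (hx0 : ∀ i, x0 i ≠ 0)
    (hconsec : ∃ i j : Fin n, (j : ℕ) = (i : ℕ) + 1 ∧ 0 < x0 i * x0 j) :
    Sp (A *ᵥ x0) ≤ Sm x0 := by
  obtain ⟨i, j, hij, hpos⟩ := hconsec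
  obtain ⟨m, rfl⟩ : ∃ m, n = m + 1 := ⟨n - 1, by omega⟩
  have hd : Sm x0 < m := Sm_lt_of_pos_mul hx0 hij hpos
  obtain ⟨β, c, z, hβ, hsurj, hc, hz, hx⟩ := exists_blockMatrix_mulVec_eq hx0
  have hy : A *ᵥ x0 = (A * blockMatrix β c) *ᵥ z := by rw [← Matrix.mulVec_mulVec, hx]
  rw [hy]
  refine Sp_mulVec_le (by omega) _ (ε (Sm x0 + 1)) (fun f hf => ?_) hz
  have hsub : (A * blockMatrix β c).submatrix f id = A.submatrix f id * blockMatrix β c := by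
    ext; simp [Matrix.mul_apply]
  rw [hsub]
  exact det_mul_blockMatrix_pos _ _ (fun g hg => hA _ (by omega) (by omega) f g hf hg) hβ hsurj hc

theorem stmt19 {n : ℕ} (hn : 2 ≤ n) (A : Matrix (Fin n) (Fin n) ℝ) (ε : ℕ → ℝ)
    (hsv : ∀ r, ε r = 1 ∨ ε r = -1)
    (hA : ∀ r : ℕ, 1 ≤ r → r ≤ n - 1 → ∀ (f g : Fin r → Fin n),
      StrictMono f → StrictMono g → 0 < ε r * (A.submatrix f g).det)
    (x0 : Fin n → ℝ) (hx0 : ∀ i, x0 i ≠ 0)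
    (hconsec : ∃ i j : Fin n, (j : ℕ) = (i : ℕ) + 1 ∧ 0 < x0 i * x0 j) :
    Sp (A *ᵥ x0) ≤ Sm x0 :=
  stmt19_general A ε hA x0 hx0 hconsec
end
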